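/- Let B be a formula over Σ_{PA^ω} with free variables among x^ι, y^σ, z^σ, d⃗, and set A[x,y,z] := Rel(z) ∧ Rel(y) ∧ B^r[x,y,z]. Then the following formula over Σ_{PA^ω}^r is provable in the logical system with relativization (with right-hand contexts restricted to negative formulas): ( ∀^r x ∀^r y (∀z ¬A[x,y,z] ⇒ ∀x′ A[x′,y,y]) ⇒ ∀f^{ι→σ} ¬∀^r x A[x, f x, f(S x)] ⇒ ⊥ ) ⇒ ( ∀^r x ∀^r y ∃^r z B^r[x,y,z] ⇒ ∀^r f^{ι→σ} ¬∀^r x B^r[x, f x, f(S x)] ⇒ ⊥ ). Consequently, the instance of the axiom DC with this A implies the relativization of the usual axiom of dependent choice. -/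

import Mathlib

/-! Multisorted classical first-order logic, deep embedding. -/

/-- Sorts: simple types over base sorts. -/
inductive FSort (B : Type) : Type
  | base : B → FSort B
  | arrow : FSort B → FSort B → FSort B

/-- A multisorted first-order signature. -/
structure Signature : Type 1 where
  Base : Type
  Cst : Type
  cstSort : Cst → FSort Base
  Pred : Type
  arity : Pred → List (FSort Base)
  isNeg : Pred → Prop

/-- Type-valued membership of an element in a list (de Bruijn pointers into a context). -/
inductive Idx {α : Type} : α → List α → Type
  | here {a : α} {l : List α} : Idx a (a :: l)
  | there {a b : α} {l : List α} : Idx a l → Idx a (b :: l)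

variable (S : Signature)

/-- Individuals (first-order terms) of the logic, in a sorted context. -/
inductive Trm : List (FSort S.Base) → FSort S.Base → Type
  | var {ctx σ} : Idx σ ctx → Trm ctx σ
  | cst {ctx} (c : S.Cst) : Trm ctx (S.cstSort c)
  | app {ctx σ τ} : Trm ctx (.arrow σ τ) → Trm ctx σ → Trm ctx τ

/-- Lists of terms matching a list of sorts (arguments of a predicate). -/
inductive TrmList (ctx : List (FSort S.Base)) : List (FSort S.Base) → Type
  | nil : TrmList ctx []
  | cons {σ l} : Trm S ctx σ → TrmList ctx l → TrmList ctx (σ :: l)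

/-- Formulas of multisorted first-order logic. -/
inductive Fml : List (FSort S.Base) → Type
  | atom {ctx} (P : S.Pred) : TrmList S ctx (S.arity P) → Fml ctx
  | bot {ctx} : Fml ctx
  | imp {ctx} : Fml ctx → Fml ctx → Fml ctx
  | conj {ctx} : Fml ctx → Fml ctx → Fml ctx
  | all {ctx} (σ : FSort S.Base) : Fml (σ :: ctx) → Fml ctx

variable {S}

/-- Context renamings. -/
def Ren (ctx ctx' : List (FSort S.Base)) : Type := ∀ σ, Idx σ ctx → Idx σ ctx'

def Ren.lift {ctx ctx' : List (FSort S.Base)} {σ : FSort S.Base} (r : Ren ctx ctx') :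
    Ren (σ :: ctx) (σ :: ctx')
  | _, .here => .here
  | _, .there i => .there (r _ i)

def Trm.ren {ctx ctx' : List (FSort S.Base)} (r : Ren ctx ctx') :
    ∀ {σ}, Trm S ctx σ → Trm S ctx' σ
  | _, .var i => .var (r _ i)
  | _, .cst c => .cst c
  | _, .app t u => .app (t.ren r) (u.ren r)

def TrmList.ren {ctx ctx' : List (FSort S.Base)} (r : Ren ctx ctx') :
    ∀ {l}, TrmList S ctx l → TrmList S ctx' l
  | _, .nil => .nil
  | _, .cons t ts => .cons (t.ren r) (ts.ren r)

def Fml.ren : ∀ {ctx ctx' : List (FSort S.Base)}, Ren ctx ctx' → Fml S ctx → Fml S ctx'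
  | _, _, r, .atom P ts => .atom P (ts.ren r)
  | _, _, _, .bot => .bot
  | _, _, r, .imp A B => .imp (A.ren r) (B.ren r)
  | _, _, r, .conj A B => .conj (A.ren r) (B.ren r)
  | _, _, r, .all σ A => .all σ (A.ren r.lift)

/-- Simultaneous substitutions. -/
def Subst (ctx ctx' : List (FSort S.Base)) : Type := ∀ σ, Idx σ ctx → Trm S ctx' σ

def Subst.lift {ctx ctx' : List (FSort S.Base)} {σ : FSort S.Base} (s : Subst ctx ctx') :
    Subst (σ :: ctx) (σ :: ctx')
  | _, .here => .var .here
  | _, .there i => (s _ i).ren (fun _ j => .there j)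

def Trm.sub {ctx ctx' : List (FSort S.Base)} (s : Subst ctx ctx') :
    ∀ {σ}, Trm S ctx σ → Trm S ctx' σ
  | _, .var i => s _ i
  | _, .cst c => .cst c
  | _, .app t u => .app (t.sub s) (u.sub s)

def TrmList.sub {ctx ctx' : List (FSort S.Base)} (s : Subst ctx ctx') :
    ∀ {l}, TrmList S ctx l → TrmList S ctx' l
  | _, .nil => .nil
  | _, .cons t ts => .cons (t.sub s) (ts.sub s)

def Fml.sub : ∀ {ctx ctx' : List (FSort S.Base)}, Subst ctx ctx' → Fml S ctx → Fml S ctx'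
  | _, _, s, .atom P ts => .atom P (ts.sub s)
  | _, _, _, .bot => .bot
  | _, _, s, .imp A B => .imp (A.sub s) (B.sub s)
  | _, _, s, .conj A B => .conj (A.sub s) (B.sub s)
  | _, _, s, .all σ A => .all σ (A.sub s.lift)

/-- Extend a substitution with a term for the head variable. -/
def Subst.cons {ctx ctx' : List (FSort S.Base)} {σ : FSort S.Base}
    (t : Trm S ctx' σ) (s : Subst ctx ctx') : Subst (σ :: ctx) ctx'
  | _, .here => t
  | _, .there i => s _ i

/-- The identity substitution. -/
def Subst.id {ctx : List (FSort S.Base)} : Subst ctx ctx := fun _ i => .var i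

/-- Substitution of a single term for the head variable of the context. -/
def Fml.sub0 {ctx : List (FSort S.Base)} {σ : FSort S.Base}
    (t : Trm S ctx σ) (A : Fml S (σ :: ctx)) : Fml S ctx :=
  A.sub (Subst.cons t Subst.id)

/-- Weakening renaming. -/
def Ren.wk {ctx : List (FSort S.Base)} {σ : FSort S.Base} : Ren ctx (σ :: ctx) :=
  fun _ i => .there i

/-- Weakening of a closed formula to an arbitrary context. -/
def Fml.wk0 {ctx : List (FSort S.Base)} (A : Fml S []) : Fml S ctx :=
  A.ren (fun _ i => by cases i)


/-! ## Polarities and relativization -/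

/-- Negative formulas: negative atoms, `⊥`, `A ⇒ N`, `N ∧ N'`, `∀x N`. -/
inductive IsNeg : ∀ {ctx : List (FSort S.Base)}, Fml S ctx → Prop
  | atom {ctx} {P : S.Pred} (h : S.isNeg P) (ts : TrmList S ctx (S.arity P)) :
      IsNeg (.atom P ts)
  | bot {ctx} : IsNeg (ctx := ctx) .bot
  | imp {ctx} {A B : Fml S ctx} : IsNeg B → IsNeg (.imp A B)
  | conj {ctx} {A B : Fml S ctx} : IsNeg A → IsNeg B → IsNeg (.conj A B)
  | all {ctx σ} {A : Fml S (σ :: ctx)} : IsNeg A → IsNeg (.all σ A)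

/-- Positive formulas: positive atoms, `A ⇒ P`, `P ∧ B`, `A ∧ P`, `∀x P`. -/
inductive IsPos : ∀ {ctx : List (FSort S.Base)}, Fml S ctx → Prop
  | atom {ctx} {P : S.Pred} (h : ¬ S.isNeg P) (ts : TrmList S ctx (S.arity P)) :
      IsPos (.atom P ts)
  | imp {ctx} {A B : Fml S ctx} : IsPos B → IsPos (.imp A B)
  | conjL {ctx} {A B : Fml S ctx} : IsPos A → IsPos (.conj A B)
  | conjR {ctx} {A B : Fml S ctx} : IsPos B → IsPos (.conj A B)
  | all {ctx σ} {A : Fml S (σ :: ctx)} : IsPos A → IsPos (.all σ A)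

variable (S) in
/-- The relativized signature `Σ^r`: `Σ` extended with a positive unary relativization
predicate `Rel(·)` at each base sort. -/
def SigR : Signature where
  Base := S.Base
  Cst := S.Cst
  cstSort := S.cstSort
  Pred := S.Pred ⊕ S.Base
  arity
    | .inl P => S.arity P
    | .inr b => [.base b]
  isNeg
    | .inl P => S.isNeg P
    | .inr _ => False

/-- Terms over `Σ` are terms over `Σ^r`. -/
def Trm.emb : ∀ {ctx : List (FSort S.Base)} {σ}, Trm S ctx σ → Trm (SigR S) ctx σ
  | _, _, .var i => .var i
  | _, _, .cst c => Trm.cst (S := SigR S) c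
  | _, _, .app t u => .app t.emb u.emb

def TrmList.emb : ∀ {ctx : List (FSort S.Base)} {l}, TrmList S ctx l → TrmList (SigR S) ctx l
  | _, _, .nil => .nil
  | _, _, .cons t ts => .cons t.emb ts.emb

/-- The relativization predicate, lifted from base sorts to all sorts by
`Rel(t : σ→τ) := ∀x^σ (Rel(x) ⇒ Rel(t x))`. -/
def RelF : ∀ {ctx : List (FSort S.Base)} (σ : FSort S.Base),
    Trm (SigR S) ctx σ → Fml (SigR S) ctx
  | _, .base b, t => Fml.atom (S := SigR S) (.inr b) (.cons t .nil)
  | _, .arrow σ τ, t =>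
      .all σ (.imp (RelF σ (.var .here)) (RelF τ (.app (t.ren Ren.wk) (.var .here))))

/-- The relativized universal quantifier `∀^r x A := ∀x (Rel(x) ⇒ A)`. -/
def allR {ctx : List (FSort S.Base)} (σ : FSort S.Base) (A : Fml (SigR S) (σ :: ctx)) :
    Fml (SigR S) ctx :=
  .all σ (.imp (RelF σ (.var .here)) A)

/-- The relativization `A^r` of a formula: every `∀x` is replaced by `∀^r x`, and
atoms, `⊥`, `⇒`, `∧` are left unchanged. -/
def Fml.relativize : ∀ {ctx : List (FSort S.Base)}, Fml S ctx → Fml (SigR S) ctx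
  | _, .atom P ts => Fml.atom (S := SigR S) (.inl P) ts.emb
  | _, .bot => .bot
  | _, .imp A B => .imp A.relativize B.relativize
  | _, .conj A B => .conj A.relativize B.relativize
  | _, .all σ A => allR σ A.relativize

/-- The embedding of formulas over `Σ` as formulas over `Σ^r` (atoms are mapped to the
corresponding atoms of `Σ^r`, everything else is unchanged). -/
def Fml.emb : ∀ {ctx : List (FSort S.Base)}, Fml S ctx → Fml (SigR S) ctx
  | _, .atom P ts => Fml.atom (S := SigR S) (.inl P) ts.emb
  | _, .bot => .bot
  | _, .imp A B => .imp A.emb B.emb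
  | _, .conj A B => .conj A.emb B.emb
  | _, .all σ A => .all σ A.emb

/-- Derivability of sequents `Γ ⊢ A | Δ` in classical multi-conclusioned natural deduction
from a theory `T` of closed axioms, with all right-hand contexts `Δ` restricted to contain
only negative formulas. -/
inductive DerivN (T : Fml S [] → Prop) :
    ∀ (ctx : List (FSort S.Base)), List (Fml S ctx) → Fml S ctx → List (Fml S ctx) → Prop
  | id {ctx Γ A Δ} : (∀ B ∈ Δ, IsNeg B) → A ∈ Γ → DerivN T ctx Γ A Δ
  | ax {ctx Γ Δ} {A : Fml S []} : (∀ B ∈ Δ, IsNeg B) → T A → DerivN T ctx Γ A.wk0 Δ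
  | botI {ctx Γ A Δ} : A ∈ Δ → DerivN T ctx Γ A Δ → DerivN T ctx Γ .bot Δ
  | botE {ctx Γ A Δ} : DerivN T ctx Γ .bot (A :: Δ) → DerivN T ctx Γ A Δ
  | impI {ctx Γ A B Δ} : DerivN T ctx (A :: Γ) B Δ → DerivN T ctx Γ (.imp A B) Δ
  | impE {ctx Γ A B Δ} :
      DerivN T ctx Γ (.imp A B) Δ → DerivN T ctx Γ A Δ → DerivN T ctx Γ B Δ
  | conjI {ctx Γ A B Δ} :
      DerivN T ctx Γ A Δ → DerivN T ctx Γ B Δ → DerivN T ctx Γ (.conj A B) Δ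
  | conjE1 {ctx Γ A B Δ} : DerivN T ctx Γ (.conj A B) Δ → DerivN T ctx Γ A Δ
  | conjE2 {ctx Γ A B Δ} : DerivN T ctx Γ (.conj A B) Δ → DerivN T ctx Γ B Δ
  | allI {ctx Γ σ A Δ} :
      DerivN T (σ :: ctx) (Γ.map (Fml.ren Ren.wk)) A (Δ.map (Fml.ren Ren.wk)) →
      DerivN T ctx Γ (.all σ A) Δ
  | allE {ctx Γ σ A Δ} (t : Trm S ctx σ) :
      DerivN T ctx Γ (.all σ A) Δ → DerivN T ctx Γ (A.sub0 t) Δ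
/-! ## Peano arithmetic in finite types, PA^ω -/

/-- Constants of `PA^ω`. -/
inductive PACst : Type
  | s : FSort Unit → FSort Unit → FSort Unit → PACst
  | k : FSort Unit → FSort Unit → PACst
  | zero : PACst
  | succ : PACst
  | recr : FSort Unit → PACst

/-- The base sort `ι` of natural numbers. -/
abbrev iota : FSort Unit := .base ()

/-- Predicates of `PA^ω`: an inequality predicate at each sort. -/
inductive PAPred : Type
  | neq : FSort Unit → PAPred

/-- The signature of `PA^ω`. -/
def PASig : Signature where
  Base := Unit
  Cst := PACst
  cstSort
    | .s σ τ ρ => .arrow (.arrow σ (.arrow τ ρ)) (.arrow (.arrow σ τ) (.arrow σ ρ))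
    | .k σ τ => .arrow σ (.arrow τ σ)
    | .zero => iota
    | .succ => .arrow iota iota
    | .recr σ => .arrow σ (.arrow (.arrow iota (.arrow σ σ)) (.arrow iota σ))
  Pred := PAPred
  arity | .neq σ => [σ, σ]
  isNeg := fun _ => True

/-- The inequality atom `t ≠ u`. -/
def neqF {ctx : List (FSort Unit)} {σ : FSort Unit} (t u : Trm PASig ctx σ) :
    Fml PASig ctx :=
  .atom (S := PASig) (.neq σ) (.cons t (.cons u .nil))

/-- Negation `¬A := A ⇒ ⊥`. -/
def notF {S : Signature} {ctx : List (FSort S.Base)} (A : Fml S ctx) : Fml S ctx := .imp A .bot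

/-- Equality `t = u := ¬(t ≠ u)`. -/
def eqF {ctx : List (FSort Unit)} {σ : FSort Unit} (t u : Trm PASig ctx σ) :
    Fml PASig ctx :=
  notF (neqF t u)

/-- Universal closure over a context. -/
def alls {S : Signature} : ∀ (ctx : List (FSort S.Base)), Fml S ctx → Fml S []
  | [], A => A
  | σ :: ctx, A => alls ctx (.all σ A)


/-- The constant `0`. -/
def zeroT {ctx : List (FSort Unit)} : Trm PASig ctx iota := Trm.cst (S := PASig) PACst.zero
/-- The constant `S`. -/
def succT {ctx : List (FSort Unit)} : Trm PASig ctx (.arrow iota iota) := Trm.cst (S := PASig) PACst.succ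
/-- The constant `s`. -/
def sT {ctx : List (FSort Unit)} (σ τ ρ : FSort Unit) :
    Trm PASig ctx (.arrow (.arrow σ (.arrow τ ρ)) (.arrow (.arrow σ τ) (.arrow σ ρ))) :=
  Trm.cst (S := PASig) (PACst.s σ τ ρ)
/-- The constant `k`. -/
def kT {ctx : List (FSort Unit)} (σ τ : FSort Unit) :
    Trm PASig ctx (.arrow σ (.arrow τ σ)) := Trm.cst (S := PASig) (PACst.k σ τ)
/-- The constant `rec`. -/
def recT {ctx : List (FSort Unit)} (σ : FSort Unit) :
    Trm PASig ctx (.arrow σ (.arrow (.arrow iota (.arrow σ σ)) (.arrow iota σ))) :=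
  Trm.cst (S := PASig) (PACst.recr σ)


/-! ## Dependent choice: the relativized implication -/

/-- The relativized signature of `PA^ω`. -/
abbrev PASigR : Signature := SigR PASig

/-- Shifting a de Bruijn pointer under a list of extra binders. -/
def Idx.shift {α : Type} : ∀ (pre : List α) {a : α} {l : List α}, Idx a l → Idx a (pre ++ l)
  | [], _, _, i => i
  | _ :: pre, _, _, i => .there (Idx.shift pre i)

/-- The substitution embedding the variables `d⃗` under a list of extra binders. -/
def shiftSubst {S : Signature} (pre : List (FSort S.Base)) {ds : List (FSort S.Base)} :
    Subst (S := S) ds (pre ++ ds) :=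
  fun _ i => .var (Idx.shift pre i)

/-! ## Auxiliary lemmas: renaming and substitution calculus -/

section Calc
variable {S : Signature}

@[simp] theorem Ren.lift_here {c c' : List (FSort S.Base)} {σ : FSort S.Base} (r : Ren c c') :
    Ren.lift (σ := σ) r σ .here = .here := rfl

@[simp] theorem Ren.lift_there {c c' : List (FSort S.Base)} {σ τ : FSort S.Base} (r : Ren c c')
    (i : Idx τ c) : Ren.lift (σ := σ) r τ (.there i) = .there (r τ i) := rfl

@[simp] theorem Subst.lift_here {c c' : List (FSort S.Base)} {σ : FSort S.Base}
    (s : Subst (S := S) c c') : Subst.lift (σ := σ) s σ .here = .var .here := rfl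

@[simp] theorem Subst.lift_there {c c' : List (FSort S.Base)} {σ τ : FSort S.Base}
    (s : Subst (S := S) c c') (i : Idx τ c) :
    Subst.lift (σ := σ) s τ (.there i) = (s τ i).ren (fun _ j => .there j) := rfl

@[simp] theorem Subst.cons_here {c c' : List (FSort S.Base)} {σ : FSort S.Base}
    (t : Trm S c' σ) (s : Subst c c') : Subst.cons t s σ .here = t := rfl

@[simp] theorem Subst.cons_there {c c' : List (FSort S.Base)} {σ τ : FSort S.Base}
    (t : Trm S c' σ) (s : Subst c c') (i : Idx τ c) : Subst.cons t s τ (.there i) = s τ i := rfl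

@[simp] theorem Idx.shift_nil {α : Type} {a : α} {l : List α} (i : Idx a l) :
    Idx.shift [] i = i := rfl

@[simp] theorem Idx.shift_cons {α : Type} {b : α} (pre : List α) {a : α} {l : List α}
    (i : Idx a l) : Idx.shift (b :: pre) i = .there (Idx.shift pre i) := rfl

@[simp] theorem shiftSubst_app {pre : List (FSort S.Base)} {dsl : List (FSort S.Base)}
    {τ : FSort S.Base} (i : Idx τ dsl) :
    shiftSubst (S := S) pre τ i = .var (Idx.shift pre i) := rfl

@[simp] theorem Trm.ren_var {c c' : List (FSort S.Base)} {σ : FSort S.Base} (r : Ren c c')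
    (i : Idx σ c) : (Trm.var (S := S) i).ren r = .var (r σ i) := rfl

@[simp] theorem Trm.ren_app {c c' : List (FSort S.Base)} {σ τ : FSort S.Base} (r : Ren c c')
    (t : Trm S c (.arrow σ τ)) (u : Trm S c σ) : (t.app u).ren r = (t.ren r).app (u.ren r) := rfl

@[simp] theorem Trm.ren_cst {c c' : List (FSort S.Base)} (r : Ren c c') (k : S.Cst) :
    (Trm.cst (ctx := c) k).ren r = Trm.cst (ctx := c') k := rfl

@[simp] theorem Trm.sub_var {c c' : List (FSort S.Base)} {σ : FSort S.Base}
    (s : Subst (S := S) c c') (i : Idx σ c) : (Trm.var (S := S) i).sub s = s σ i := rfl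

@[simp] theorem Trm.sub_app {c c' : List (FSort S.Base)} {σ τ : FSort S.Base}
    (s : Subst (S := S) c c') (t : Trm S c (.arrow σ τ)) (u : Trm S c σ) :
    (t.app u).sub s = (t.sub s).app (u.sub s) := rfl

@[simp] theorem Trm.sub_cst {c c' : List (FSort S.Base)} (s : Subst (S := S) c c') (k : S.Cst) :
    (Trm.cst (ctx := c) k).sub s = Trm.cst (ctx := c') k := rfl

theorem Trm.ren_ren {c1 c2 c3 : List (FSort S.Base)} (r : Ren c1 c2) (r' : Ren c2 c3) :
    ∀ {σ} (t : Trm S c1 σ), (t.ren r).ren r' = t.ren (fun τ i => r' τ (r τ i))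
  | _, .var i => rfl
  | _, .cst k => rfl
  | _, .app t u => by
      simp only [Trm.ren_app, Trm.ren_ren r r' t, Trm.ren_ren r r' u]
      rfl

theorem Trm.sub_ren' {c1 c2 c3 : List (FSort S.Base)} (r : Ren c1 c2) (s : Subst (S := S) c2 c3) :
    ∀ {σ} (t : Trm S c1 σ), (t.ren r).sub s = t.sub (fun τ i => s τ (r τ i))
  | _, .var i => rfl
  | _, .cst k => rfl
  | _, .app t u => by
      simp only [Trm.ren_app, Trm.sub_app, Trm.sub_ren' r s t, Trm.sub_ren' r s u]
      rfl

theorem Trm.ren_sub' {c1 c2 c3 : List (FSort S.Base)} (s : Subst (S := S) c1 c2) (r : Ren c2 c3) :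
    ∀ {σ} (t : Trm S c1 σ), (t.sub s).ren r = t.sub (fun τ i => (s τ i).ren r)
  | _, .var i => rfl
  | _, .cst k => rfl
  | _, .app t u => by
      simp only [Trm.sub_app, Trm.ren_app, Trm.ren_sub' s r t, Trm.ren_sub' s r u]
      rfl

theorem Trm.sub_sub {c1 c2 c3 : List (FSort S.Base)} (s : Subst (S := S) c1 c2)
    (s' : Subst (S := S) c2 c3) :
    ∀ {σ} (t : Trm S c1 σ), (t.sub s).sub s' = t.sub (fun τ i => (s τ i).sub s')
  | _, .var i => rfl
  | _, .cst k => rfl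
  | _, .app t u => by
      simp only [Trm.sub_app, Trm.sub_sub s s' t, Trm.sub_sub s s' u]
      rfl

end Calc
section Calc2
variable {S : Signature}

theorem Ren.lift_comp {c1 c2 c3 : List (FSort S.Base)} {σ : FSort S.Base}
    (r : Ren c1 c2) (r' : Ren c2 c3) :
    (Ren.lift (σ := σ) (fun τ i => r' τ (r τ i)) : Ren (σ :: c1) (σ :: c3)) =
      fun τ i => (Ren.lift r') τ ((Ren.lift r) τ i) := by
  funext τ i; cases i <;> rfl

theorem TrmList.ren_ren {c1 c2 c3 : List (FSort S.Base)} (r : Ren c1 c2) (r' : Ren c2 c3) :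
    ∀ {l} (ts : TrmList S c1 l), (ts.ren r).ren r' = ts.ren (fun τ i => r' τ (r τ i))
  | _, .nil => rfl
  | _, .cons t ts => by
      simp only [TrmList.ren, Trm.ren_ren, TrmList.ren_ren r r' ts]

theorem Fml.ren_ren {c1 c2 c3 : List (FSort S.Base)} (r : Ren c1 c2) (r' : Ren c2 c3) :
    ∀ (A : Fml S c1), (A.ren r).ren r' = A.ren (fun τ i => r' τ (r τ i))
  | .atom P ts => by simp only [Fml.ren, TrmList.ren_ren]
  | .bot => rfl
  | .imp A B => by simp only [Fml.ren, Fml.ren_ren r r' A, Fml.ren_ren r r' B]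
  | .conj A B => by simp only [Fml.ren, Fml.ren_ren r r' A, Fml.ren_ren r r' B]
  | .all σ A => by
      simp only [Fml.ren, Fml.ren_ren r.lift r'.lift A, Ren.lift_comp]

theorem Subst.lift_comp_ren {c1 c2 c3 : List (FSort S.Base)} {σ : FSort S.Base}
    (r : Ren c1 c2) (s : Subst (S := S) c2 c3) :
    (Subst.lift (σ := σ) (fun τ i => s τ (r τ i)) : Subst (σ :: c1) (σ :: c3)) =
      fun τ i => (Subst.lift s) τ ((Ren.lift r) τ i) := by
  funext τ i; cases i <;> rfl

theorem TrmList.sub_ren {c1 c2 c3 : List (FSort S.Base)} (r : Ren c1 c2)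
    (s : Subst (S := S) c2 c3) :
    ∀ {l} (ts : TrmList S c1 l), (ts.ren r).sub s = ts.sub (fun τ i => s τ (r τ i))
  | _, .nil => rfl
  | _, .cons t ts => by
      simp only [TrmList.ren, TrmList.sub, Trm.sub_ren', TrmList.sub_ren r s ts]

theorem Fml.sub_ren {c1 c2 c3 : List (FSort S.Base)} (r : Ren c1 c2) (s : Subst (S := S) c2 c3) :
    ∀ (A : Fml S c1), (A.ren r).sub s = A.sub (fun τ i => s τ (r τ i))
  | .atom P ts => by simp only [Fml.ren, Fml.sub, TrmList.sub_ren]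
  | .bot => rfl
  | .imp A B => by simp only [Fml.ren, Fml.sub, Fml.sub_ren r s A, Fml.sub_ren r s B]
  | .conj A B => by simp only [Fml.ren, Fml.sub, Fml.sub_ren r s A, Fml.sub_ren r s B]
  | .all σ A => by
      simp only [Fml.ren, Fml.sub, Fml.sub_ren r.lift s.lift A, Subst.lift_comp_ren]

theorem Subst.lift_comp_sub {c1 c2 c3 : List (FSort S.Base)} {σ : FSort S.Base}
    (s : Subst (S := S) c1 c2) (r : Ren c2 c3) :
    (Subst.lift (σ := σ) (fun τ i => (s τ i).ren r) : Subst (σ :: c1) (σ :: c3)) =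
      fun τ i => ((Subst.lift s) τ i).ren (Ren.lift r) := by
  funext τ i; cases i with
  | here => rfl
  | there i =>
      show ((s _ i).ren r).ren (fun _ j => .there j) = ((s _ i).ren _).ren (Ren.lift r)
      erw [Trm.ren_ren, Trm.ren_ren]; rfl

theorem TrmList.ren_sub {c1 c2 c3 : List (FSort S.Base)} (s : Subst (S := S) c1 c2)
    (r : Ren c2 c3) :
    ∀ {l} (ts : TrmList S c1 l), (ts.sub s).ren r = ts.sub (fun τ i => (s τ i).ren r)
  | _, .nil => rfl
  | _, .cons t ts => by
      simp only [TrmList.ren, TrmList.sub, Trm.ren_sub', TrmList.ren_sub s r ts]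

theorem Fml.ren_sub {c1 c2 c3 : List (FSort S.Base)} (s : Subst (S := S) c1 c2) (r : Ren c2 c3) :
    ∀ (A : Fml S c1), (A.sub s).ren r = A.sub (fun τ i => (s τ i).ren r)
  | .atom P ts => by simp only [Fml.ren, Fml.sub, TrmList.ren_sub]
  | .bot => rfl
  | .imp A B => by simp only [Fml.ren, Fml.sub, Fml.ren_sub s r A, Fml.ren_sub s r B]
  | .conj A B => by simp only [Fml.ren, Fml.sub, Fml.ren_sub s r A, Fml.ren_sub s r B]
  | .all σ A => by
      simp only [Fml.ren, Fml.sub, Fml.ren_sub s.lift r.lift A, Subst.lift_comp_sub]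

theorem Subst.lift_comp {c1 c2 c3 : List (FSort S.Base)} {σ : FSort S.Base}
    (s : Subst (S := S) c1 c2) (s' : Subst (S := S) c2 c3) :
    (Subst.lift (σ := σ) (fun τ i => (s τ i).sub s') : Subst (σ :: c1) (σ :: c3)) =
      fun τ i => ((Subst.lift s) τ i).sub (Subst.lift s') := by
  funext τ i; cases i with
  | here => rfl
  | there i =>
      show ((s _ i).sub s').ren (fun _ j => .there j) = ((s _ i).ren _).sub (Subst.lift s')
      erw [Trm.ren_sub', Trm.sub_ren']; rfl

theorem TrmList.sub_sub {c1 c2 c3 : List (FSort S.Base)} (s : Subst (S := S) c1 c2)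
    (s' : Subst (S := S) c2 c3) :
    ∀ {l} (ts : TrmList S c1 l), (ts.sub s).sub s' = ts.sub (fun τ i => (s τ i).sub s')
  | _, .nil => rfl
  | _, .cons t ts => by
      simp only [TrmList.sub, Trm.sub_sub, TrmList.sub_sub s s' ts]

theorem Fml.sub_sub {c1 c2 c3 : List (FSort S.Base)} (s : Subst (S := S) c1 c2)
    (s' : Subst (S := S) c2 c3) :
    ∀ (A : Fml S c1), (A.sub s).sub s' = A.sub (fun τ i => (s τ i).sub s')
  | .atom P ts => by simp only [Fml.sub, TrmList.sub_sub]
  | .bot => rfl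
  | .imp A B => by simp only [Fml.sub, Fml.sub_sub s s' A, Fml.sub_sub s s' B]
  | .conj A B => by simp only [Fml.sub, Fml.sub_sub s s' A, Fml.sub_sub s s' B]
  | .all σ A => by
      simp only [Fml.sub, Fml.sub_sub s.lift s'.lift A, Subst.lift_comp]

theorem Trm.sub_id {c : List (FSort S.Base)} : ∀ {σ} (t : Trm S c σ), t.sub Subst.id = t
  | _, .var i => rfl
  | _, .cst k => rfl
  | _, .app t u => by simp only [Trm.sub_app, Trm.sub_id t, Trm.sub_id u]

theorem Subst.lift_id {c : List (FSort S.Base)} {σ : FSort S.Base} :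
    (Subst.lift (σ := σ) (Subst.id (S := S) (ctx := c))) = Subst.id := by
  funext τ i; cases i <;> rfl

theorem TrmList.sub_id {c : List (FSort S.Base)} :
    ∀ {l} (ts : TrmList S c l), ts.sub Subst.id = ts
  | _, .nil => rfl
  | _, .cons t ts => by simp only [TrmList.sub, Trm.sub_id, TrmList.sub_id ts]

theorem Fml.sub_id {c : List (FSort S.Base)} : ∀ (A : Fml S c), A.sub Subst.id = A
  | .atom P ts => by simp only [Fml.sub, TrmList.sub_id]
  | .bot => rfl
  | .imp A B => by simp only [Fml.sub, Fml.sub_id A, Fml.sub_id B]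
  | .conj A B => by simp only [Fml.sub, Fml.sub_id A, Fml.sub_id B]
  | .all σ A => by simp only [Fml.sub, Subst.lift_id, Fml.sub_id A]

end Calc2
section Calc3
variable {S : Signature}

theorem RelF_ren {c c' : List (FSort S.Base)} (r : Ren (S := SigR S) c c') :
    ∀ (σ : FSort S.Base) (t : Trm (SigR S) c σ), (RelF σ t).ren r = RelF σ (t.ren r)
  | .base b, t => rfl
  | .arrow σ τ, t => by
    simp only [RelF, Fml.ren, RelF_ren r.lift σ, RelF_ren r.lift τ, Trm.ren_var,
      Ren.lift_here, Trm.ren_app]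
    erw [RelF_ren r.lift σ, RelF_ren r.lift τ]
    exact congrArg (fun (u : Trm (SigR S) (σ :: c') (.arrow σ τ)) =>
      Fml.all (S := SigR S) σ ((RelF σ (Trm.var .here)).imp (RelF τ (Trm.app u (Trm.var .here)))))
      ((Trm.ren_ren Ren.wk r.lift t).trans (Trm.ren_ren r Ren.wk t).symm)

theorem RelF_sub {c c' : List (FSort S.Base)} (s : Subst (S := SigR S) c c') :
    ∀ (σ : FSort S.Base) (t : Trm (SigR S) c σ), (RelF σ t).sub s = RelF σ (t.sub s)
  | .base b, t => rfl
  | .arrow σ τ, t => by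
    simp only [RelF, Fml.sub, RelF_sub s.lift σ, RelF_sub s.lift τ, Trm.sub_var,
      Subst.lift_here, Trm.sub_app]
    erw [RelF_sub s.lift σ, RelF_sub s.lift τ]
    exact congrArg (fun (u : Trm (SigR S) (σ :: c') (.arrow σ τ)) =>
      Fml.all (S := SigR S) σ ((RelF σ (Trm.var .here)).imp (RelF τ (Trm.app u (Trm.var .here)))))
      ((Trm.sub_ren' Ren.wk s.lift t).trans (Trm.ren_sub' s Ren.wk t).symm)

theorem IsNeg.ren_ : ∀ {c} {A : Fml S c}, IsNeg A → ∀ {c'} (r : Ren c c'), IsNeg (A.ren r)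
  | _, _, .atom h ts, _, r => .atom h _
  | _, _, .bot, _, _ => .bot
  | _, _, .imp hB, _, r => .imp (hB.ren_ r)
  | _, _, .conj hA hB, _, r => .conj (hA.ren_ r) (hB.ren_ r)
  | _, _, .all hA, _, r => .all (hA.ren_ r.lift)

theorem IsNeg.sub_ : ∀ {c} {A : Fml S c}, IsNeg A → ∀ {c'} (s : Subst (S := S) c c'),
    IsNeg (A.sub s)
  | _, _, .atom h ts, _, s => .atom h _
  | _, _, .bot, _, _ => .bot
  | _, _, .imp hB, _, s => .imp (hB.sub_ s)
  | _, _, .conj hA hB, _, s => .conj (hA.sub_ s) (hB.sub_ s)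
  | _, _, .all hA, _, s => .all (hA.sub_ s.lift)

theorem isNeg_relativize : ∀ {c} (A : Fml PASig c), IsNeg (A.relativize)
  | _, .atom P ts => .atom trivial _
  | _, .bot => .bot
  | _, .imp A B => .imp (isNeg_relativize B)
  | _, .conj A B => .conj (isNeg_relativize A) (isNeg_relativize B)
  | _, .all σ A => .all (.imp (isNeg_relativize A))

/-- `(D[wk_lifted])[var 0] = D`. -/
theorem sub0_ren_lift_wk {τ : FSort S.Base} {c : List (FSort S.Base)} (D : Fml S (τ :: c)) :
    (D.ren (Ren.lift (Ren.wk (σ := τ)))).sub0 (.var .here) = D := by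
  unfold Fml.sub0
  rw [Fml.sub_ren]
  have : (fun τ' i => Subst.cons (Trm.var .here) Subst.id τ'
      (Ren.lift (Ren.wk (σ := τ)) τ' i) : Subst (S := S) (τ :: c) (τ :: c)) = Subst.id := by
    funext τ' i; cases i <;> rfl
  rw [this, Fml.sub_id]

end Calc3
section DC

variable (σ : FSort Unit) (ds : List (FSort Unit)) (B : Fml PASig (iota :: σ :: σ :: ds))

/-- `B^r`, the relativization of `B`; free variables `x^ι, y^σ, z^σ, d⃗`. -/
def BrDC : Fml PASigR (iota :: σ :: σ :: ds) := B.relativize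

/-- `A[x,y,z] := Rel(z) ∧ (Rel(y) ∧ B^r[x,y,z])`. -/
def ADC : Fml PASigR (iota :: σ :: σ :: ds) :=
  .conj (RelF σ (.var (.there (.there .here))))
    (.conj (RelF σ (.var (.there .here))) (BrDC σ ds B))

/-- Instance `A[tx,ty,tz]` of `A` (and similarly for `B^r`). -/
def instDC {ctx' : List (FSort Unit)} (G : Fml PASigR (iota :: σ :: σ :: ds))
    (tx : Trm PASigR ctx' iota) (ty tz : Trm PASigR ctx' σ)
    (ss : Subst (S := PASigR) ds ctx') : Fml PASigR ctx' :=
  G.sub (Subst.cons tx (Subst.cons ty (Subst.cons tz ss)))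

/-- `∀^r x ∀^r y (∀z ¬A[x,y,z] ⇒ ∀x′ A[x′,y,y])`. -/
def P1DC : Fml PASigR ds :=
  allR iota (allR σ (.imp
    (.all σ (notF (instDC σ ds (ADC σ ds B)
      (.var (.there (.there .here))) (.var (.there .here)) (.var .here)
      (shiftSubst (S := PASigR) [σ, σ, iota]))))
    (.all iota (instDC σ ds (ADC σ ds B)
      (.var .here) (.var (.there .here)) (.var (.there .here))
      (shiftSubst (S := PASigR) [iota, σ, iota])))))

/-- `∀f^{ι→σ} ¬∀^r x A[x, f x, f (S x)]` (unrelativized quantification over `f`). -/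
def P2DC : Fml PASigR ds :=
  .all (.arrow iota σ) (notF (allR iota (instDC σ ds (ADC σ ds B)
    (.var .here)
    (.app (.var (.there .here)) (.var .here))
    (.app (.var (.there .here)) (.app succT.emb (.var .here)))
    (shiftSubst (S := PASigR) [iota, .arrow iota σ]))))

/-- `∀^r x ∀^r y ∃^r z B^r[x,y,z]`, with `∃^r z C := ¬∀^r z ¬C`. -/
def Q1DC : Fml PASigR ds :=
  allR iota (allR σ (notF (allR σ (notF (instDC σ ds (BrDC σ ds B)
    (.var (.there (.there .here))) (.var (.there .here)) (.var .here)
    (shiftSubst (S := PASigR) [σ, σ, iota]))))))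

/-- `∀^r f^{ι→σ} ¬∀^r x B^r[x, f x, f (S x)]`. -/
def Q2DC : Fml PASigR ds :=
  allR (.arrow iota σ) (notF (allR iota (instDC σ ds (BrDC σ ds B)
    (.var .here)
    (.app (.var (.there .here)) (.var .here))
    (.app (.var (.there .here)) (.app succT.emb (.var .here)))
    (shiftSubst (S := PASigR) [iota, .arrow iota σ]))))

/-! ## DC-specific lemmas -/

theorem RelF_subP {c c' : List (FSort Unit)} (s : Subst (S := PASigR) c c')
    (τ : FSort Unit) (t : Trm PASigR c τ) : (RelF τ t).sub s = RelF τ (t.sub s) :=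
  RelF_sub s τ t

theorem RelF_renP {c c' : List (FSort Unit)} (r : Ren (S := PASigR) c c')
    (τ : FSort Unit) (t : Trm PASigR c τ) : (RelF τ t).ren r = RelF τ (t.ren r) :=
  RelF_ren r τ t

theorem ADC_inst {ctx' : List (FSort Unit)} (tx : Trm PASigR ctx' iota) (ty tz : Trm PASigR ctx' σ)
    (ss : Subst (S := PASigR) ds ctx') :
    instDC σ ds (ADC σ ds B) tx ty tz ss =
      .conj (RelF σ tz) (.conj (RelF σ ty) (instDC σ ds (BrDC σ ds B) tx ty tz ss)) := by
  unfold instDC ADC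
  simp only [Fml.sub]
  erw [RelF_subP, RelF_subP]
  rfl

theorem isNeg_instBr {ctx' : List (FSort Unit)} (tx : Trm PASigR ctx' iota)
    (ty tz : Trm PASigR ctx' σ) (ss : Subst (S := PASigR) ds ctx') :
    IsNeg (instDC σ ds (BrDC σ ds B) tx ty tz ss) :=
  IsNeg.sub_ (isNeg_relativize B) _

/-- The inner workhorse for `P2`: from the hypothesis `HA` (weakened) and `Rel x`,
derive the instance `A[x, f x, f (S x)]`. -/
theorem P2inner (Γ2 : List (Fml PASigR (iota :: .arrow iota σ :: ds)))
    (hHA : Fml.all iota ((Fml.imp (RelF (S := PASig) iota (.var .here))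
        (instDC (ctx' := iota :: .arrow iota σ :: ds) σ ds (ADC σ ds B)
          (.var .here)
          (.app (.var (.there .here)) (.var .here))
          (.app (.var (.there .here)) (.app succT.emb (.var .here)))
          (shiftSubst (S := PASigR) [iota, .arrow iota σ]))).ren
            (Ren.lift (Ren.wk (σ := iota)))) ∈ Γ2)
    (hRx : RelF iota (.var .here) ∈ Γ2) :
    DerivN (S := PASigR) (fun _ => False) _ Γ2
      (.conj (RelF σ (.app (.var (.there .here)) (.app succT.emb (.var .here))))
        (.conj (RelF σ (.app (.var (.there .here)) (.var .here)))
          (instDC (ctx' := iota :: .arrow iota σ :: ds) σ ds (BrDC σ ds B)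
            (.var .here)
            (.app (.var (.there .here)) (.var .here))
            (.app (.var (.there .here)) (.app succT.emb (.var .here)))
            (shiftSubst (S := PASigR) [iota, .arrow iota σ])))) [] := by
  have h1 := (DerivN.id (T := fun _ => False) (Δ := []) (by simp) hHA).allE (.var .here)
  erw [sub0_ren_lift_wk] at h1
  have h2 := h1.impE (DerivN.id (by simp) hRx)
  erw [ADC_inst] at h2
  exact h2

theorem derive_P2 (Γ : List (Fml PASigR ds)) (h2 : Q2DC σ ds B ∈ Γ) :
    DerivN (S := PASigR) (fun _ => False) ds Γ (P2DC σ ds B) [] := by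
  refine DerivN.allI ?_
  refine DerivN.impI ?_
  -- context: f^{ι→σ} :: ds, hypotheses: HA := allR iota IA, Γ.map wk; goal ⊥
  have hq := (DerivN.id (T := fun _ => False) (Δ := [])
      (Γ := allR iota (instDC (ctx' := iota :: .arrow iota σ :: ds) σ ds (ADC σ ds B)
          (.var .here)
          (.app (.var (.there .here)) (.var .here))
          (.app (.var (.there .here)) (.app succT.emb (.var .here)))
          (shiftSubst (S := PASigR) [iota, .arrow iota σ])) :: List.map (Fml.ren Ren.wk) Γ)
      (A := Fml.all (.arrow iota σ)
        ((Fml.imp (RelF (S := PASig) (.arrow iota σ) (.var .here))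
          (notF (allR iota (instDC (ctx' := iota :: .arrow iota σ :: ds) σ ds (BrDC σ ds B)
            (.var .here)
            (.app (.var (.there .here)) (.var .here))
            (.app (.var (.there .here)) (.app succT.emb (.var .here)))
            (shiftSubst (S := PASigR) [iota, .arrow iota σ]))))).ren
              (Ren.lift (Ren.wk (σ := .arrow iota σ)))))
      (by simp)
      (by exact List.mem_cons_of_mem _ (List.mem_map_of_mem (f := Fml.ren Ren.wk) h2))).allE
      (.var .here)
  erw [sub0_ren_lift_wk] at hq
  -- Rel f
  have hnb := hq.impE (by
    show DerivN (S := PASigR) (fun _ => False) _ _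
      (.all iota (.imp (RelF iota (.var .here))
        (RelF σ (.app (.var (.there .here)) (.var .here))))) []
    refine DerivN.allI ?_
    refine DerivN.impI ?_
    exact (P2inner σ ds B _
      (by exact List.mem_cons_of_mem _ (List.mem_map_of_mem (f := Fml.ren Ren.wk) (List.mem_cons_self)))
      (List.mem_cons_self)).conjE2.conjE1)
  refine hnb.impE ?_
  refine DerivN.allI ?_
  refine DerivN.impI ?_
  exact (P2inner σ ds B _
    (by exact List.mem_cons_of_mem _ (List.mem_map_of_mem (f := Fml.ren Ren.wk) (List.mem_cons_self)))
    (List.mem_cons_self)).conjE2.conjE2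
/-! ### Equality lemmas for the `P1` derivation -/

theorem EQ1a :
    (Fml.imp (RelF (S := PASig) iota (.var .here))
        (allR σ (notF (allR σ (notF (instDC (ctx' := σ :: σ :: iota :: ds) σ ds (BrDC σ ds B)
          (.var (.there (.there .here))) (.var (.there .here)) (.var .here)
          (shiftSubst (S := PASigR) [σ, σ, iota]))))))
      |>.ren (Ren.lift (Ren.wk (σ := iota)))
      |>.ren (Ren.lift (Ren.wk (σ := σ)))
      |>.ren (Ren.lift (Ren.wk (σ := iota)))
      |>.sub0 (Trm.var (.there (.there .here))))
    = Fml.imp (RelF (S := PASig) iota (.var (.there (.there .here))))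
        (allR σ (.imp
          (allR σ (notF (instDC (ctx' := σ :: σ :: iota :: σ :: iota :: ds) σ ds (BrDC σ ds B)
            (.var (.there (.there (.there (.there .here)))))
            (.var (.there .here)) (.var .here)
            (shiftSubst (S := PASigR) [σ, σ, iota, σ, iota]))))
          .bot)) := by
  unfold Fml.sub0 instDC allR notF
  erw [Fml.ren_ren, Fml.ren_ren, Fml.sub_ren]
  refine congrArg₂ Fml.imp ?_ (congrArg (Fml.all (S := PASigR) σ) (congrArg₂ Fml.imp ?_
    (congrArg₂ Fml.imp (congrArg (Fml.all (S := PASigR) σ) (congrArg₂ Fml.imp ?_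
      (congrArg₂ Fml.imp ?_ rfl))) rfl)))
  · erw [RelF_subP]; rfl
  · erw [RelF_subP]; rfl
  · erw [RelF_subP]; rfl
  refine (Fml.sub_sub _ _ _).trans (congrArg (fun s => Fml.sub s (BrDC σ ds B)) ?_)
  funext τ i
  cases i with
  | here => rfl
  | there i => cases i with
    | here => rfl
    | there i => cases i with
      | here => rfl
      | there i => rfl
theorem RelF_wk_var {c : List (FSort Unit)} {ρ τ : FSort Unit} (i : Idx τ c) :
    Fml.ren (Ren.wk (σ := ρ)) (RelF (S := PASig) τ (.var i)) = RelF τ (.var (.there i)) :=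
  RelF_renP _ _ _

theorem EQ1b :
    (Fml.imp (RelF (S := PASig) σ (.var .here))
        (.imp (allR σ (notF (instDC (ctx' := σ :: σ :: iota :: σ :: iota :: ds) σ ds (BrDC σ ds B)
            (.var (.there (.there (.there (.there .here)))))
            (.var (.there .here)) (.var .here)
            (shiftSubst (S := PASigR) [σ, σ, iota, σ, iota]))))
          .bot)
      |>.sub0 (Trm.var (.there .here)))
    = Fml.imp (RelF (S := PASig) σ (.var (.there .here)))
        (.imp (allR σ (notF (instDC (ctx' := σ :: iota :: σ :: iota :: ds) σ ds (BrDC σ ds B)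
            (.var (.there (.there (.there .here))))
            (.var (.there (.there .here))) (.var .here)
            (shiftSubst (S := PASigR) [σ, iota, σ, iota]))))
          .bot) := by
  unfold Fml.sub0 instDC allR notF
  refine congrArg₂ Fml.imp ?_ (congrArg₂ Fml.imp (congrArg (Fml.all (S := PASigR) σ)
    (congrArg₂ Fml.imp ?_ (congrArg₂ Fml.imp ?_ rfl))) rfl)
  · erw [RelF_subP]; rfl
  · erw [RelF_subP]; rfl
  refine (Fml.sub_sub _ _ _).trans (congrArg (fun s => Fml.sub s (BrDC σ ds B)) ?_)
  funext τ i
  cases i with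
  | here => rfl
  | there i => cases i with
    | here => rfl
    | there i => cases i with
      | here => rfl
      | there i => rfl

theorem EQ1c :
    (Fml.imp (instDC (ctx' := σ :: σ :: iota :: ds) σ ds (ADC σ ds B)
        (.var (.there (.there .here))) (.var (.there .here)) (.var .here)
        (shiftSubst (S := PASigR) [σ, σ, iota])) Fml.bot
      |>.ren (Ren.lift (Ren.wk (σ := iota)))
      |>.ren (Ren.lift (Ren.wk (σ := σ)))
      |>.sub0 (Trm.var .here))
    = Fml.imp (instDC (ctx' := σ :: iota :: σ :: iota :: ds) σ ds (ADC σ ds B)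
        (.var (.there (.there (.there .here))))
        (.var (.there (.there .here))) (.var .here)
        (shiftSubst (S := PASigR) [σ, iota, σ, iota])) Fml.bot := by
  unfold Fml.sub0 instDC ADC
  erw [Fml.ren_ren, Fml.sub_ren]
  refine congrArg₂ Fml.imp ?_ rfl
  refine (Fml.sub_sub _ _ _).trans (congrArg (fun s => Fml.sub s _) ?_)
  funext τ i
  cases i with
  | here => rfl
  | there i => cases i with
    | here => rfl
    | there i => cases i with
      | here => rfl
      | there i => rfl

/-- Innermost step of `P1`: contradiction between `∀z ¬A[x,y,z]` and the
freshly introduced `Rel z`, `Rel y`, `B^r[x,y,z]`. -/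
theorem P1botinner (Δ : List (Fml PASigR (σ :: iota :: σ :: iota :: ds)))
    (hΔ : ∀ b ∈ Δ, IsNeg b)
    (Γ8 : List (Fml PASigR (σ :: iota :: σ :: iota :: ds)))
    (hNA : Fml.all σ
        (Fml.imp (instDC (ctx' := σ :: σ :: iota :: ds) σ ds (ADC σ ds B)
          (.var (.there (.there .here))) (.var (.there .here)) (.var .here)
          (shiftSubst (S := PASigR) [σ, σ, iota])) Fml.bot
        |>.ren (Ren.lift (Ren.wk (σ := iota)))
        |>.ren (Ren.lift (Ren.wk (σ := σ)))) ∈ Γ8)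
    (hIB : instDC (ctx' := σ :: iota :: σ :: iota :: ds) σ ds (BrDC σ ds B)
        (.var (.there (.there (.there .here)))) (.var (.there (.there .here))) (.var .here)
        (shiftSubst (S := PASigR) [σ, iota, σ, iota]) ∈ Γ8)
    (hRz : RelF σ (.var .here) ∈ Γ8)
    (hRy : RelF σ (.var (.there (.there .here))) ∈ Γ8) :
    DerivN (S := PASigR) (fun _ => False) _ Γ8 .bot Δ := by
  have h := (DerivN.id (T := fun _ => False) hΔ hNA).allE (.var .here)
  erw [EQ1c] at h
  refine h.impE ?_
  erw [ADC_inst σ ds B (.var (.there (.there (.there .here)))) (.var (.there (.there .here)))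
    (.var .here) (shiftSubst (S := PASigR) [σ, iota, σ, iota])]
  exact DerivN.conjI (.id hΔ hRz) (DerivN.conjI (.id hΔ hRy) (.id hΔ hIB))

/-- The contradiction at the heart of `P1`: `Q1` together with `∀z ¬A[x,y,z]`,
`Rel x`, `Rel y` yields `⊥`. -/
theorem P1bot (Δ : List (Fml PASigR (iota :: σ :: iota :: ds))) (hΔ : ∀ b ∈ Δ, IsNeg b)
    (Γ6 : List (Fml PASigR (iota :: σ :: iota :: ds)))
    (hQ1 : Fml.all iota
        (Fml.imp (RelF (S := PASig) iota (.var .here))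
          (allR σ (notF (allR σ (notF (instDC (ctx' := σ :: σ :: iota :: ds) σ ds (BrDC σ ds B)
            (.var (.there (.there .here))) (.var (.there .here)) (.var .here)
            (shiftSubst (S := PASigR) [σ, σ, iota]))))))
        |>.ren (Ren.lift (Ren.wk (σ := iota)))
        |>.ren (Ren.lift (Ren.wk (σ := σ)))
        |>.ren (Ren.lift (Ren.wk (σ := iota)))) ∈ Γ6)
    (hNA : Fml.all σ
        (Fml.imp (instDC (ctx' := σ :: σ :: iota :: ds) σ ds (ADC σ ds B)
          (.var (.there (.there .here))) (.var (.there .here)) (.var .here)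
          (shiftSubst (S := PASigR) [σ, σ, iota])) Fml.bot
        |>.ren (Ren.lift (Ren.wk (σ := iota)))) ∈ Γ6)
    (hRx : RelF iota (.var (.there (.there .here))) ∈ Γ6)
    (hRy : RelF σ (.var (.there .here)) ∈ Γ6) :
    DerivN (S := PASigR) (fun _ => False) _ Γ6 .bot Δ := by
  have h := (DerivN.id (T := fun _ => False) hΔ hQ1).allE (.var (.there (.there .here)))
  erw [EQ1a] at h
  have h2 := (h.impE (.id hΔ hRx)).allE (.var (.there .here))
  erw [EQ1b] at h2
  have h3 := h2.impE (.id hΔ hRy)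
  refine h3.impE ?_
  refine DerivN.allI ?_
  refine DerivN.impI ?_
  refine DerivN.impI ?_
  refine P1botinner σ ds B _ ?_ _ ?_ ?_ ?_ ?_
  · intro b hb
    rw [List.mem_map] at hb
    obtain ⟨a, ha, rfl⟩ := hb
    exact (hΔ a ha).ren_ _
  · exact List.mem_cons_of_mem _ (List.mem_cons_of_mem _
      (List.mem_map_of_mem (f := Fml.ren Ren.wk) hNA))
  · exact List.mem_cons_self
  · exact List.mem_cons_of_mem _ (List.mem_cons_self)
  · refine List.mem_cons_of_mem _ (List.mem_cons_of_mem _ ?_)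
    exact (congrArg (· ∈ _) (RelF_wk_var _)).mp (List.mem_map_of_mem hRy)

theorem derive_P1 (Γ : List (Fml PASigR ds)) (h1 : Q1DC σ ds B ∈ Γ) :
    DerivN (S := PASigR) (fun _ => False) ds Γ (P1DC σ ds B) [] := by
  refine DerivN.allI ?_
  refine DerivN.impI ?_
  refine DerivN.allI ?_
  refine DerivN.impI ?_
  refine DerivN.impI ?_
  refine DerivN.allI ?_
  erw [ADC_inst σ ds B (.var .here) (.var (.there .here)) (.var (.there .here))
    (shiftSubst (S := PASigR) [iota, σ, iota])]
  refine DerivN.conjI (DerivN.id (by simp) ?_) (DerivN.conjI (DerivN.id (by simp) ?_) ?_)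
  ·     exact (congrArg (· ∈ _) (RelF_wk_var _)).mp (List.mem_map_of_mem (List.mem_cons_of_mem _ (List.mem_cons_self)))
  ·     exact (congrArg (· ∈ _) (RelF_wk_var _)).mp (List.mem_map_of_mem (List.mem_cons_of_mem _ (List.mem_cons_self)))
  · refine DerivN.botE ?_
    refine P1bot σ ds B _ ?_ _ ?_ ?_ ?_ ?_
    · intro b hb
      simp only [List.map_nil] at hb
      rw [List.mem_singleton] at hb
      subst hb
      exact isNeg_instBr σ ds B _ _ _ _
    · exact List.mem_map_of_mem (f := Fml.ren Ren.wk) (List.mem_cons_of_mem _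
        (List.mem_cons_of_mem _ (List.mem_map_of_mem (f := Fml.ren Ren.wk)
          (List.mem_cons_of_mem _ (List.mem_map_of_mem (f := Fml.ren Ren.wk) h1)))))
    · exact List.mem_map_of_mem (f := Fml.ren Ren.wk) (List.mem_cons_self)
    · exact List.mem_map_of_mem (f := Fml.ren Ren.wk) (List.mem_cons_of_mem _
        (List.mem_cons_of_mem _ (List.mem_map_of_mem (f := Fml.ren Ren.wk)
          (List.mem_cons_self))))
    ·       exact (congrArg (· ∈ _) (RelF_wk_var _)).mp (List.mem_map_of_mem (List.mem_cons_of_mem _ (List.mem_cons_self)))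
/-- The formula `(P1 ⇒ P2 ⇒ ⊥) ⇒ (Q1 ⇒ Q2 ⇒ ⊥)` over `Σ_{PA^ω}^r`, whose provability
(in the relativized system, with negative right-hand contexts) shows that the instance of
the axiom `DC` with `A[x,y,z] = Rel(z) ∧ Rel(y) ∧ B^r[x,y,z]` implies the relativization
of the usual axiom of dependent choice. -/
theorem dc_implies_relativized_dc :
    DerivN (S := PASigR) (fun _ => False) ds []
      (.imp (.imp (P1DC σ ds B) (.imp (P2DC σ ds B) .bot))
        (.imp (Q1DC σ ds B) (.imp (Q2DC σ ds B) .bot)))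
      [] := by
  refine DerivN.impI ?_
  refine DerivN.impI ?_
  refine DerivN.impI ?_
  have hH : DerivN (S := PASigR) (fun _ => False) ds
      [Q2DC σ ds B, Q1DC σ ds B, .imp (P1DC σ ds B) (.imp (P2DC σ ds B) .bot)]
      (.imp (P1DC σ ds B) (.imp (P2DC σ ds B) .bot)) [] :=
    .id (by simp) (List.mem_cons_of_mem _ (List.mem_cons_of_mem _ (List.mem_cons_self)))
  exact (hH.impE (derive_P1 σ ds B _
      (List.mem_cons_of_mem _ (List.mem_cons_self)))).impE
    (derive_P2 σ ds B _ (List.mem_cons_self))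

end DC
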